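/- Let F be the family of all subsets of [5] of size at most 3 and A, B i.i.d. uniform on F. Then H(A) = log₂ 26 and H(A ∪ B) < H(A). -/

import Mathlib

/-!
The uniform `A` has entropy `log₂ |F| = log₂ 26`. The number `c_S` of pairs `(A, B) ∈ F²`
with `A ∪ B = S` is `3 ^ |S|` for `|S| ≤ 3` and `50` for `|S| ≥ 4`, so
`676 · H(A ∪ B) = 676 · log₂ 676 - ∑_S c_S log₂ c_S = 1352 · log₂ 26 - log₂ (3 ^ 1005 · 50 ^ 300)`,
and `H(A ∪ B) < log₂ 26` becomes the integer inequality `26 ^ 676 < 3 ^ 1005 · 50 ^ 300`.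
-/

open Finset

/-- Base-2 Shannon entropy of a probability distribution `p` supported on `s`. -/
noncomputable def entropy {α : Type*} (s : Finset α) (p : α → ℝ) : ℝ :=
  ∑ x ∈ s, -(p x * Real.logb 2 (p x))

/-- The family of all subsets of `[5]` of size at most 3. -/
def F9 : Finset (Finset (Fin 5)) := Finset.univ.filter (fun S => S.card ≤ 3)

/-- Distribution of `A ∪ B` where `A, B` are i.i.d. uniform on `F9`. -/
noncomputable def unionDist9 (S : Finset (Fin 5)) : ℝ :=
  (((F9 ×ˢ F9).filter (fun q => q.1 ∪ q.2 = S)).card : ℝ) / ((F9 ×ˢ F9).card : ℝ)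

section Entropy

variable {α : Type*}

theorem entropy_uniform (s : Finset α) :
    entropy s (fun _ => (#s : ℝ)⁻¹) = Real.logb 2 #s := by
  rcases eq_or_ne (#s : ℝ) 0 with hs | hs
  · simp [entropy, hs]
  · simp only [entropy, sum_const, nsmul_eq_mul, Real.logb_inv]
    field_simp

theorem entropy_div_of_sum_eq (s : Finset α) (c : α → ℝ) {N : ℝ} (hN : N ≠ 0)
    (hc : ∑ x ∈ s, c x = N) :
    entropy s (fun x => c x / N)
      = Real.logb 2 N - (∑ x ∈ s, c x * Real.logb 2 (c x)) / N := by
  have hterm (x : α) : -(c x / N * Real.logb 2 (c x / N))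
      = c x / N * Real.logb 2 N - c x * Real.logb 2 (c x) / N := by
    rcases eq_or_ne (c x) 0 with hx | hx
    · simp [hx]
    · rw [Real.logb_div hx hN]; ring
  simp only [entropy, hterm, sum_sub_distrib, ← sum_mul, ← sum_div, hc, div_self hN, one_mul]

theorem sum_natCast_mul_logb (b : ℝ) (s : Finset α) (c : α → ℕ) :
    ∑ x ∈ s, (c x : ℝ) * Real.logb b (c x) = Real.logb b (∏ x ∈ s, c x ^ c x : ℕ) := by
  rw [Nat.cast_prod, Real.logb_prod _ _ fun x _ => Nat.cast_ne_zero.mpr Nat.pow_self_pos.ne']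
  refine sum_congr rfl fun x _ => ?_
  rw [Nat.cast_pow, Real.logb_pow]

end Entropy

theorem card_F9 : #F9 = 26 := by decide

def unionCount9 (S : Finset (Fin 5)) : ℕ := #{q ∈ F9 ×ˢ F9 | q.1 ∪ q.2 = S}

/- For `#S ≤ 3` every pair `(A, B)` with `A ∪ B = S` lies in `F9 ×ˢ F9` and amounts to
putting each element of `S` in `A`, in `B` or in both. For `#S = 4` this overcounts by the
`31` pairs with `A = S` or `B = S`; for `#S = 5` the `50` pairs are `|A| = 3` (with `B` the
complement plus at most one point of `A`) or `|A| = 2, B = Aᶜ`. -/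
set_option maxRecDepth 100000 in
theorem unionCount9_eq (S : Finset (Fin 5)) :
    unionCount9 S = if #S ≤ 3 then 3 ^ #S else 50 := by
  revert S; decide

set_option maxRecDepth 100000 in
theorem prod_unionCount9_pow :
    ∏ S, unionCount9 S ^ unionCount9 S = 3 ^ 1005 * 50 ^ 300 := by
  simp only [unionCount9_eq]
  decide

set_option maxRecDepth 100000 in
theorem image₂_union_F9 : image₂ (· ∪ ·) F9 F9 = univ := by decide

theorem sum_unionCount9 : ∑ S, (unionCount9 S : ℝ) = #(F9 ×ˢ F9) := by
  rw [← image₂_union_F9]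
  exact_mod_cast (card_eq_sum_card_fiberwise fun q hq =>
    mem_image₂_of_mem (mem_product.1 hq).1 (mem_product.1 hq).2).symm

set_option maxRecDepth 100000 in
theorem mul_logb_26_lt_logb : 676 * Real.logb 2 26 < Real.logb 2 (3 ^ 1005 * 50 ^ 300) := by
  rw [← Nat.cast_ofNat (n := 676), ← Real.logb_pow]
  exact Real.logb_lt_logb (by norm_num) (by positivity)
    (by exact_mod_cast (by decide : 26 ^ 676 < 3 ^ 1005 * 50 ^ 300))

/-- For `F = {S ⊆ [5] : |S| ≤ 3}` and `A, B` i.i.d. uniform on `F`: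
`H(A) = log₂ 26` and `H(A ∪ B) < H(A)`. -/
theorem stmt9 :
    entropy F9 (fun _ => (F9.card : ℝ)⁻¹) = Real.logb 2 26 ∧
    entropy (Finset.image₂ (· ∪ ·) F9 F9) unionDist9
      < entropy F9 (fun _ => (F9.card : ℝ)⁻¹) := by
  have hA : entropy F9 (fun _ => (#F9 : ℝ)⁻¹) = Real.logb 2 26 := by
    rw [entropy_uniform, card_F9, Nat.cast_ofNat]
  refine ⟨hA, ?_⟩
  have hN : (#(F9 ×ˢ F9) : ℝ) = 26 ^ 2 := by
    rw [card_product, card_F9]; norm_num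
  have hAB : entropy (image₂ (· ∪ ·) F9 F9) unionDist9
      = 2 * Real.logb 2 26 - Real.logb 2 (3 ^ 1005 * 50 ^ 300) / 676 := by
    rw [image₂_union_F9, show unionDist9 = fun S => (unionCount9 S : ℝ) / #(F9 ×ˢ F9) from rfl,
      entropy_div_of_sum_eq _ _ (by rw [hN]; norm_num) sum_unionCount9, sum_natCast_mul_logb,
      prod_unionCount9_pow, hN, Real.logb_pow]
    push_cast
    ring
  rw [hA, hAB]
  linarith [mul_logb_26_lt_logb]
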